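/- Let σ be a continuous Kronecker measure on ℝ. Then for any two distinct nonzero rational numbers r_1 and r_2 and every t ∈ ℝ, the measures σ_{r_1} and σ_{r_2} * δ_t are mutually singular. -/

import Mathlib

open MeasureTheory Filter Topology
open scoped ENNReal NNReal

/-- `ξ_s(x) = exp(2πisx)`. -/
noncomputable def xi (s x : ℝ) : ℂ := Complex.exp (2 * Real.pi * Complex.I * s * x)

/-- A finite positive Borel measure on `ℝ` is a Kronecker measure. -/
def IsKronecker (σ : Measure ℝ) : Prop :=
  ∀ f : ℝ → ℂ, MemLp f 2 σ → (∀ᵐ x ∂σ, ‖f x‖ = 1) →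
    ∃ t : ℕ → ℝ, Tendsto t atTop atTop ∧
      Tendsto (fun n => eLpNorm (fun x => xi (t n) x - f x) 2 σ) atTop (𝓝 0)

/-!
A common nonzero part of `σ_{r₁}` and `σ_{r₂} * δ_t`, pulled back along `x ↦ r₁ x`, is a nonzero
measure `μ ≪ σ` whose image under the affine map `ψ x = r x + b`, `r = r₁ / r₂ = p / q`, is again
`≪ σ`. As `q ψ x - p x` is constant, `ξ_s(ψ x)^q ξ_s(x)^(-p)` does not depend on `x`; approximating
a unimodular `f` by characters `σ`-a.e. (the Kronecker property) shows that `f(ψ x)^q f(x)^(-p)`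
is `μ`-a.e. constant. For `f = exp(i 1_A)` the irrationality of `π` turns this into the
`μ`-a.e. constancy of the integer `q 1_A(ψ x) - p 1_A(x)`, which fails for a ball `A` around the
fixed point of `ψ` that splits `μ` (it exists since `μ` has no atoms) unless `r ∈ {0, 1}`.
-/

open Metric Set

theorem Filter.eventuallyConst_of_eventually_tendsto {α β ι : Type*} [TopologicalSpace β]
    [T2Space β] {l : Filter α} {l' : Filter ι} [l'.NeBot] {c : ι → β} {F : α → β}
    (h : ∀ᶠ x in l, Tendsto c l' (𝓝 (F x))) : EventuallyConst F l :=
  l.basis_sets.eventuallyConst_iff.2 ⟨_, h, fun _ hx _ hy => tendsto_nhds_unique hx hy⟩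

theorem Filter.EventuallyConst.of_comp_injective {α β γ : Type*} {l : Filter α} {f : α → β}
    {g : β → γ} (h : EventuallyConst (g ∘ f) l) (hg : Function.Injective g) :
    EventuallyConst f l := by
  obtain ⟨s, hs, hgf⟩ := l.basis_sets.eventuallyConst_iff.1 h
  exact l.basis_sets.eventuallyConst_iff.2 ⟨s, hs, fun x hx y hy => hg (hgf x hx y hy)⟩

theorem Complex.exp_intCast_mul_I_injective :
    Function.Injective fun k : ℤ => Complex.exp (k * Complex.I) := by
  intro k k' h
  obtain ⟨n, hn⟩ := Complex.exp_eq_exp_iff_exists_int.1 h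
  have hreal : (k : ℝ) = k' + n * (2 * Real.pi) := by simpa using congrArg Complex.im hn
  rcases eq_or_ne n 0 with rfl | hn0
  · exact_mod_cast (by simpa using hreal : (k : ℝ) = k')
  · have hirr := (irrational_pi.mul_natCast two_ne_zero).mul_intCast hn0
    exact (hirr.ne_int (k - k') (by push_cast; linarith)).elim

theorem MeasureTheory.Measure.exists_closedBall_measure_ne_zero_measure_compl_ne_zero
    {X : Type*} [PseudoMetricSpace X] [MeasurableSpace X] [HereditarilyLindelofSpace X]
    {μ : Measure X} (hμ : μ ≠ 0) (m : X) (hsphere : ∀ r, μ (sphere m r) = 0) :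
    ∃ s, μ (closedBall m s) ≠ 0 ∧ μ (closedBall m s)ᶜ ≠ 0 := by
  have of_lt : ∀ a ∈ μ.support, ∀ b ∈ μ.support, dist a m < dist b m →
      ∃ s, μ (closedBall m s) ≠ 0 ∧ μ (closedBall m s)ᶜ ≠ 0 := by
    intro a ha b hb hab
    refine ⟨(dist a m + dist b m) / 2, ((μ.mem_support_iff_forall a).1 ha _ ?_).ne',
      ((μ.mem_support_iff_forall b).1 hb _ ?_).ne'⟩
    · exact mem_of_superset (isOpen_ball.mem_nhds (by rw [mem_ball]; linarith))
        ball_subset_closedBall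
    · exact isClosed_closedBall.isOpen_compl.mem_nhds
        (by rw [mem_compl_iff, mem_closedBall]; linarith)
  obtain ⟨a, ha⟩ := Measure.nonempty_support hμ
  obtain ⟨b, hb, hab⟩ : ∃ b ∈ μ.support, dist b m ≠ dist a m := by
    by_contra! h
    refine hμ (Measure.measure_univ_eq_zero.1 (measure_mono_null (fun x _ => ?_)
      (measure_union_null (hsphere (dist a m)) Measure.measure_compl_support)))
    by_cases hx : x ∈ μ.support
    · exact Or.inl (h x hx)
    · exact Or.inr hx
  rcases hab.lt_or_gt with h | h
  · exact of_lt b hb a ha h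
  · exact of_lt a ha b hb h

theorem Real.finite_sphere (m r : ℝ) : (sphere m r).Finite := by
  rcases lt_or_ge r 0 with hr | hr
  · simp [sphere_eq_empty_of_neg hr]
  · simp [Real.sphere_eq_pair m hr]

theorem MeasureTheory.Measure.AbsolutelyContinuous.map_of_leftInverse {α β : Type*}
    [MeasurableSpace α] [MeasurableSpace β] {ρ : Measure β} {σ : Measure α} {f : α → β}
    {g : β → α} (hρ : ρ ≪ σ.map f) (hf : Measurable f) (hg : Measurable g)
    (hgf : Function.LeftInverse g f) : ρ.map g ≪ σ := by
  simpa [Measure.map_map hg hf, hgf.comp_eq_id] using hρ.map hg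

theorem continuous_xi (s : ℝ) : Continuous (xi s) := by
  unfold xi
  fun_prop

theorem xi_zpow_mul_zpow (s u v : ℝ) (m n : ℤ) :
    xi s u ^ m * xi s v ^ n = xi s (m * u + n * v) := by
  simp only [xi, ← Complex.exp_int_mul, ← Complex.exp_add]
  push_cast
  ring_nf

theorem IsKronecker.exists_tendsto_ae {σ : Measure ℝ} [IsFiniteMeasure σ] (hσ : IsKronecker σ)
    {f : ℝ → ℂ} (hf : AEStronglyMeasurable f σ) (hf1 : ∀ᵐ x ∂σ, ‖f x‖ = 1) :
    ∃ t : ℕ → ℝ, ∀ᵐ x ∂σ, Tendsto (fun n => xi (t n) x) atTop (𝓝 (f x)) := by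
  obtain ⟨t, -, ht⟩ := hσ f (MemLp.of_bound hf 1 (hf1.mono fun x hx => hx.le)) hf1
  obtain ⟨n, -, hn⟩ := (tendstoInMeasure_of_tendsto_eLpNorm two_ne_zero
    (fun n => (continuous_xi (t n)).aestronglyMeasurable) hf ht).exists_seq_tendsto_ae
  exact ⟨t ∘ n, hn⟩

section AffineImage

variable {σ μ : Measure ℝ} [IsFiniteMeasure σ] {ψ : ℝ → ℝ} {p q : ℤ} {w : ℝ}

theorem IsKronecker.eventuallyConst_comp_zpow_mul_zpow (hσ : IsKronecker σ) (hμ : μ ≪ σ)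
    (hψ : Measurable ψ) (hμψ : μ.map ψ ≪ σ) (hw : ∀ x, q * ψ x - p * x = w) {f : ℝ → ℂ}
    (hf : AEStronglyMeasurable f σ) (hf1 : ∀ x, ‖f x‖ = 1) :
    EventuallyConst (fun x => f (ψ x) ^ q * f x ^ (-p)) (ae μ) := by
  obtain ⟨t, ht⟩ := hσ.exists_tendsto_ae hf (ae_of_all _ hf1)
  have hf0 : ∀ y, f y ≠ 0 := fun y => norm_ne_zero_iff.1 (by rw [hf1]; exact one_ne_zero)
  refine eventuallyConst_of_eventually_tendsto (l' := atTop) (c := fun n => xi (t n) w) ?_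
  filter_upwards [hμ.ae_le ht, ae_of_ae_map hψ.aemeasurable (hμψ.ae_le ht)] with x hx hψx
  convert (hψx.zpow₀ q (Or.inl (hf0 _))).mul (hx.zpow₀ (-p) (Or.inl (hf0 _))) using 2 with n
  rw [xi_zpow_mul_zpow, ← hw x]
  push_cast
  ring_nf

theorem IsKronecker.eventuallyConst_indicator (hσ : IsKronecker σ) (hμ : μ ≪ σ)
    (hψ : Measurable ψ) (hμψ : μ.map ψ ≪ σ) (hw : ∀ x, q * ψ x - p * x = w) {A : Set ℝ}
    (hA : MeasurableSet A) :
    EventuallyConst (fun x => (q * A.indicator 1 (ψ x) - p * A.indicator 1 x : ℤ)) (ae μ) := by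
  set f : ℝ → ℂ := fun x => Complex.exp (A.indicator (1 : ℝ → ℤ) x * Complex.I)
  have hf : Measurable f := by fun_prop
  have hf1 : ∀ x, ‖f x‖ = 1 := fun x => by
    simpa using Complex.norm_exp_ofReal_mul_I ((A.indicator 1 x : ℤ) : ℝ)
  refine (hσ.eventuallyConst_comp_zpow_mul_zpow hμ hψ hμψ hw hf.aestronglyMeasurable hf1
    |>.congr (ae_of_all _ fun x => ?_)).of_comp_injective Complex.exp_intCast_mul_I_injective
  simp only [f, Function.comp_apply, ← Complex.exp_int_mul, ← Complex.exp_add]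
  push_cast
  ring_nf

end AffineImage

theorem IsKronecker.eq_zero_of_absolutelyContinuous_map_affine {σ μ : Measure ℝ}
    [IsFiniteMeasure σ] [NullSingletonClass σ] (hσ : IsKronecker σ) (hμ : μ ≪ σ) {r : ℚ}
    (hr₀ : r ≠ 0) (hr₁ : r ≠ 1) (b : ℝ) (hμψ : μ.map (fun x => r * x + b) ≪ σ) : μ = 0 := by
  by_contra hμ0
  set ψ : ℝ → ℝ := fun x => r * x + b
  -- `m` is the fixed point of `ψ`; when `r = -1`, `ψ` is the reflection in `m`.
  set m : ℝ := b / (1 - r)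
  have hψm : ∀ x, ψ x - m = r * (x - m) := fun x => by
    have : (1 - r : ℝ) ≠ 0 := sub_ne_zero.2 (by exact_mod_cast hr₁.symm)
    simp only [ψ, m]
    field_simp
    ring
  obtain ⟨s, hin, hout⟩ := Measure.exists_closedBall_measure_ne_zero_measure_compl_ne_zero hμ0 m
    fun _ => hμ ((Real.finite_sphere _ _).measure_zero σ)
  set A := closedBall m s
  have hw : ∀ x, (r.den : ℤ) * ψ x - r.num * x = r.den * b := fun x => by
    have : (r : ℝ) * r.den = r.num := by exact_mod_cast Rat.mul_den_eq_num r
    simp only [ψ]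
    push_cast
    linear_combination x * this
  obtain ⟨S, hS, hconst⟩ := (ae μ).basis_sets.eventuallyConst_iff.1 <|
    hσ.eventuallyConst_indicator hμ (by fun_prop) hμψ hw measurableSet_closedBall (A := A)
  obtain ⟨xa, hxa, hxaS⟩ :=
    Measure.exists_mem_of_measure_ne_zero_of_ae hin (ae_restrict_of_ae hS)
  obtain ⟨xb, hxb : xb ∉ A, hxbS⟩ :=
    Measure.exists_mem_of_measure_ne_zero_of_ae hout (ae_restrict_of_ae hS)
  have hψxa : r.num + r.den = 0 → ψ xa ∈ A := fun h => by
    have : r = -1 := by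
      rw [← Rat.num_div_den r, eq_neg_of_add_eq_zero_left h]
      simp
    rwa [mem_closedBall, Real.dist_eq, hψm, this, Rat.cast_neg, Rat.cast_one, neg_one_mul,
      abs_neg, ← Real.dist_eq]
  have hnum_ne_zero : r.num ≠ 0 := Rat.num_ne_zero.2 hr₀
  have hnum_ne_den : r.num ≠ r.den := fun h => hr₁ (by rw [← Rat.num_div_den r, h]; simp)
  have hvalues := hconst xa hxaS xb hxbS
  by_cases ha : ψ xa ∈ A
  · by_cases hb : ψ xb ∈ A <;>
      simp only [indicator_of_mem, indicator_of_notMem, hxa, hxb, ha, hb, not_false_eq_true,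
        Pi.one_apply] at hvalues <;> omega
  · have hsum := mt hψxa ha
    by_cases hb : ψ xb ∈ A <;>
      simp only [indicator_of_mem, indicator_of_notMem, hxa, hxb, ha, hb, not_false_eq_true,
        Pi.one_apply] at hvalues <;> omega

theorem statement5_general (σ : Measure ℝ) [IsFiniteMeasure σ]
    (hcont : ∀ x, σ {x} = 0) (hK : IsKronecker σ)
    (r₁ r₂ : ℚ) (hr₁ : r₁ ≠ 0) (hr₂ : r₂ ≠ 0) (hne : r₁ ≠ r₂) (t : ℝ) :
    σ.map (fun x => (r₁ : ℝ) * x) ⟂ₘ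
      (σ.map (fun x => (r₂ : ℝ) * x)).map (fun x => x + t) := by
  have : NullSingletonClass σ := ⟨hcont⟩
  have hr₁' : (r₁ : ℝ) ≠ 0 := by exact_mod_cast hr₁
  have hr₂' : (r₂ : ℝ) ≠ 0 := by exact_mod_cast hr₂
  rw [Measure.map_map (measurable_add_const t) (measurable_const_mul _),
    Measure.mutuallySingular_iff_disjoint, disjoint_iff]
  set ρ := σ.map (fun x => (r₁ : ℝ) * x) ⊓ σ.map ((· + t) ∘ fun x => (r₂ : ℝ) * x)
  set μ := ρ.map (· / (r₁ : ℝ))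
  have hμ : μ ≪ σ :=
    (Measure.absolutelyContinuous_of_le inf_le_left).map_of_leftInverse (by fun_prop)
      (by fun_prop) fun x => by field_simp
  have hμψ : μ.map (fun x => ((r₁ / r₂ : ℚ) : ℝ) * x + -t / r₂) ≪ σ := by
    rw [Measure.map_map (by fun_prop) (by fun_prop)]
    refine (Measure.absolutelyContinuous_of_le inf_le_right).map_of_leftInverse (by fun_prop)
      (by fun_prop) fun x => ?_
    simp only [Function.comp_apply, Rat.cast_div]
    field_simp
    ring
  have hμ0 := hK.eq_zero_of_absolutelyContinuous_map_affine hμ (div_ne_zero hr₁ hr₂)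
    (by rwa [Ne, div_eq_one_iff_eq hr₂]) _ hμψ
  exact (Measure.map_eq_zero_iff (by fun_prop)).1 hμ0

theorem statement5 (σ : Measure ℝ) [IsFiniteMeasure σ] (hσpos : σ ≠ 0)
    (hcont : ∀ x, σ {x} = 0) (hK : IsKronecker σ)
    (r₁ r₂ : ℚ) (hr₁ : r₁ ≠ 0) (hr₂ : r₂ ≠ 0) (hne : r₁ ≠ r₂) (t : ℝ) :
    σ.map (fun x => (r₁ : ℝ) * x) ⟂ₘ
      (σ.map (fun x => (r₂ : ℝ) * x)).map (fun x => x + t) :=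
  statement5_general σ hcont hK r₁ r₂ hr₁ hr₂ hne t
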